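/- arXiv:2109.03372 — 4 statements merged into one kernel-verified Lean document; each statement's English description precedes it below -/
import Mathlib

section
/- Let (G, M, I) be a formal context, let c = (A, B) be a formal concept, and let H ⊆ B be a generator of c, i.e., H'' = B. Then for every upper cover c_d = (A_d, B_d) of c in the concept lattice, H intersects the intentional face of c with respect to c_d: H ∩ (B \ B_d) ≠ ∅. That is, every generator of the intent is a blocker of the family of intentional faces of c. -/
/-- The derivation `A'`: attributes common to all objects of `A`. -/
def intentOf {G M : Type*} (I : Set (G × M)) (A : Set G) : Set M :=
  {m | ∀ g ∈ A, (g, m) ∈ I}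

/-- The derivation `B'`: objects sharing all attributes of `B`. -/
def extentOf {G M : Type*} (I : Set (G × M)) (B : Set M) : Set G :=
  {g | ∀ m ∈ B, (g, m) ∈ I}

/-- A formal concept of the context `(G, M, I)`: a pair `(A, B)` with `A' = B` and `B' = A`. -/
def IsConcept {G M : Type*} (I : Set (G × M)) (A : Set G) (B : Set M) : Prop :=
  intentOf I A = B ∧ extentOf I B = A

/-- `(Ad, Bd)` is an upper cover of the concept `(A, B)`: it is a concept strictly above
`(A, B)` (concepts are ordered by inclusion of extents) with no concept strictly between. -/
def IsUpperCover {G M : Type*} (I : Set (G × M)) (A : Set G) (_B : Set M)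
    (Ad : Set G) (Bd : Set M) : Prop :=
  IsConcept I Ad Bd ∧ A ⊂ Ad ∧
    ∀ A₃ : Set G, ∀ B₃ : Set M, IsConcept I A₃ B₃ → ¬(A ⊂ A₃ ∧ A₃ ⊂ Ad)

/-- `(Al, Bl)` is a lower cover of the concept `(A, B)`: it is a concept strictly below
`(A, B)` (concepts are ordered by inclusion of extents) with no concept strictly between. -/
def IsLowerCover {G M : Type*} (I : Set (G × M)) (A : Set G) (_B : Set M)
    (Al : Set G) (Bl : Set M) : Prop :=
  IsConcept I Al Bl ∧ Al ⊂ A ∧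
    ∀ A₃ : Set G, ∀ B₃ : Set M, IsConcept I A₃ B₃ → ¬(Al ⊂ A₃ ∧ A₃ ⊂ A)

/-- Every generator of the intent of a concept is a blocker of the family of its
intentional faces: it meets the face `B \ B_d` of every upper cover `(A_d, B_d)`. -/
theorem generator_blocks_intentional_faces {G M : Type*} (I : Set (G × M))
    (A : Set G) (B : Set M) (h : IsConcept I A B)
    (H : Set M) (hHB : H ⊆ B) (hgen : intentOf I (extentOf I H) = B) :
    ∀ (Ad : Set G) (Bd : Set M), IsUpperCover I A B Ad Bd → (H ∩ (B \ Bd)).Nonempty := by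

  intro Ad Bd hcov
  obtain ⟨⟨hAdB, hBdA⟩, hAAd, _⟩ := hcov
  by_contra hemp
  rw [Set.not_nonempty_iff_eq_empty] at hemp
  -- H ⊆ Bd
  have hHBd : H ⊆ Bd := by
    intro m hm
    by_contra hmBd
    have : m ∈ H ∩ (B \ Bd) := ⟨hm, hHB hm, hmBd⟩
    simp [hemp] at this
  -- Ad ⊆ extentOf I H
  have h1 : Ad ⊆ extentOf I H := by
    intro g hg m hm
    have : g ∈ extentOf I Bd := hBdA ▸ hg
    exact this m (hHBd hm)
  -- B = intentOf (extentOf H) ⊆ intentOf Ad = Bd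
  have h2 : B ⊆ Bd := by
    intro m hm
    rw [← hgen] at hm
    rw [← hAdB]
    intro g hg
    exact hm g (h1 hg)
  -- Then Ad ⊆ extentOf B = A, contradiction with A ⊂ Ad
  have h3 : Ad ⊆ A := by
    rw [← h.2]
    intro g hg m hm
    have : g ∈ extentOf I Bd := hBdA ▸ hg
    exact this m (h2 hm)
  exact hAAd.2 h3
end

section
/- Let (G, M, I) be a finite formal context and let c = (A, B) be a formal concept. If H ⊆ B intersects every intentional face of c, i.e., H ∩ (B \ B_d) ≠ ∅ for every upper cover c_d = (A_d, B_d) of c in the concept lattice, then H is a generator of c: H'' = B. That is, every blocker of the family of intentional faces of c generates the intent of c. -/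
/-- In a finite context, every blocker of the family of intentional faces of a concept
generates its intent. -/
theorem blocker_of_faces_is_generator {G M : Type*} [Finite G] [Finite M]
    (I : Set (G × M)) (A : Set G) (B : Set M) (h : IsConcept I A B)
    (H : Set M) (hHB : H ⊆ B)
    (hblock : ∀ (Ad : Set G) (Bd : Set M), IsUpperCover I A B Ad Bd →
      (H ∩ (B \ Bd)).Nonempty) :
    intentOf I (extentOf I H) = B := by

  have anti_int : ∀ {A1 A2 : Set G}, A1 ⊆ A2 → intentOf I A2 ⊆ intentOf I A1 := by
    intro A1 A2 hs m hm g hg; exact hm g (hs hg)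
  have anti_ext : ∀ {B1 B2 : Set M}, B1 ⊆ B2 → extentOf I B2 ⊆ extentOf I B1 := by
    intro B1 B2 hs g hg m hm; exact hg m (hs hm)
  have le1 : ∀ B0 : Set M, B0 ⊆ intentOf I (extentOf I B0) := by
    intro B0 m hm g hg; exact hg m hm
  have le2 : ∀ A0 : Set G, A0 ⊆ extentOf I (intentOf I A0) := by
    intro A0 g hg m hm; exact hm g hg
  set A1 := extentOf I H with hA1
  have hAA1 : A ⊆ A1 := by
    rw [← h.2]; exact anti_ext hHB
  have hsub : intentOf I A1 ⊆ B := by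
    rw [← h.1]; exact anti_int hAA1
  by_contra hne
  have hAne : A ≠ A1 := by
    intro he; exact hne (by rw [← he, h.1])
  have hAlt : A ⊂ A1 := HasSubset.Subset.ssubset_of_ne hAA1 hAne
  have hconc1 : IsConcept I A1 (intentOf I A1) :=
    ⟨rfl, subset_antisymm (anti_ext (le1 H)) (le2 A1)⟩
  -- pick a minimal concept extent strictly between A and A1 (inclusive of A1)
  set S : Set (Set G) := {A₃ | (∃ B₃, IsConcept I A₃ B₃) ∧ A ⊂ A₃ ∧ A₃ ⊆ A1} with hS
  have hSne : S.Nonempty := ⟨A1, ⟨_, hconc1⟩, hAlt, subset_rfl⟩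
  obtain ⟨Ad, hAdS, hmin⟩ := (wellFounded_lt (α := Set G)).has_min S hSne
  obtain ⟨⟨Bd, hBd⟩, hAAd, hAdA1⟩ := hAdS
  have hcover : IsUpperCover I A B Ad Bd := by
    refine ⟨hBd, hAAd, ?_⟩
    intro A₃ B₃ hc3 ⟨h1, h2⟩
    exact hmin A₃ ⟨⟨_, hc3⟩, h1, h2.subset.trans hAdA1⟩ h2
  obtain ⟨m, hmH, _, hmBd⟩ := hblock Ad Bd hcover
  apply hmBd
  rw [← hBd.1]
  exact anti_int hAdA1 (le1 H hmH)
end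

section
/- Let (G, M, I) be a finite formal context and let c = (A, B) be a formal concept. A subset H ⊆ B is a minimal generator of c (H'' = B and no proper subset H₁ ⊊ H satisfies H₁'' = B) if and only if H is a minimal blocker of the family Λ_c = { B \ B_d : c_d = (A_d, B_d) is an upper cover of c } of intentional faces of c (H meets every member of Λ_c and no proper subset of H does). This correspondence underlies the correctness of the Minigen procedure (Algorithm 1). -/
/-!
A generator `H ⊆ B` is exactly a set contained in no intent `B_d` of an upper cover: if
`H ⊆ B_d` then `B = H'' ⊆ B_d'' = B_d`, impossible above `c`; and if `H'' ≠ B`, the concept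
`(H', H'')` lies strictly above `c`, so by finiteness some upper cover `(A_d, B_d)` has
`A_d ⊆ H'`, whence `H ⊆ H'' ⊆ B_d`. For `H ⊆ B`, not lying inside `B_d` means meeting the
face `B \ B_d`, so generators are the blockers of `Λ_c`, and minimality transfers verbatim.
-/

/-- The family `Λ_c` of intentional faces of the concept `(A, B)`. -/
def intentionalFaces {G M : Type*} (I : Set (G × M)) (A : Set G) (B : Set M) : Set (Set M) :=
  {f | ∃ (Ad : Set G) (Bd : Set M), IsUpperCover I A B Ad Bd ∧ f = B \ Bd}

section Derivation

variable {G M : Type*} (I : Set (G × M))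

-- The derivations are Mathlib's polars for the relation `fun g m ↦ (g, m) ∈ I`.
theorem intentOf_anti : Antitone (intentOf I) :=
  upperPolar_anti (fun g m => (g, m) ∈ I)

theorem extentOf_anti : Antitone (extentOf I) :=
  lowerPolar_anti (fun g m => (g, m) ∈ I)

theorem subset_intentOf_extentOf (B : Set M) : B ⊆ intentOf I (extentOf I B) :=
  subset_upperPolar_lowerPolar (r := fun g m => (g, m) ∈ I) B

theorem isConcept_extentOf (B : Set M) :
    IsConcept I (extentOf I B) (intentOf I (extentOf I B)) :=
  ⟨rfl, lowerPolar_upperPolar_lowerPolar (r := fun g m => (g, m) ∈ I) B⟩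

theorem exists_isUpperCover_subset [Finite G] {A A₁ : Set G} {B B₁ : Set M}
    (hc₁ : IsConcept I A₁ B₁) (hA : A ⊂ A₁) :
    ∃ Ad Bd, IsUpperCover I A B Ad Bd ∧ Ad ⊆ A₁ := by
  obtain ⟨E, ⟨⟨BE, hE, hAE, hEA₁⟩, hmin⟩⟩ := exists_minimal_of_wellFoundedLT
    (fun E : Set G => ∃ BE, IsConcept I E BE ∧ A ⊂ E ∧ E ⊆ A₁) ⟨A₁, B₁, hc₁, hA, le_rfl⟩
  refine ⟨E, BE, ⟨hE, hAE, fun A₃ B₃ h₃ ⟨hA₃, hA₃E⟩ => ?_⟩, hEA₁⟩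
  exact hA₃E.not_subset (hmin ⟨B₃, h₃, hA₃, hA₃E.subset.trans hEA₁⟩ hA₃E.subset)

end Derivation

namespace IsConcept

variable {G M : Type*} {I : Set (G × M)} {A : Set G} {B : Set M}

theorem subset_extentOf (hc : IsConcept I A B) {K : Set M} (hK : K ⊆ B) :
    A ⊆ extentOf I K :=
  hc.2 ▸ extentOf_anti I hK

theorem not_subset_of_extent_ssubset (hc : IsConcept I A B) {Ad : Set G} {Bd : Set M}
    (hd : IsConcept I Ad Bd) (hA : A ⊂ Ad) : ¬B ⊆ Bd :=
  fun hB => hA.not_subset (hc.2 ▸ hd.2 ▸ extentOf_anti I hB)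

theorem intentOf_extentOf_eq_iff [Finite G] (hc : IsConcept I A B) {K : Set M}
    (hK : K ⊆ B) :
    intentOf I (extentOf I K) = B ↔ ∀ Ad Bd, IsUpperCover I A B Ad Bd → ¬K ⊆ Bd := by
  constructor
  · rintro hgen Ad Bd ⟨hd, hA, -⟩ hKBd
    refine hc.not_subset_of_extent_ssubset hd hA ?_
    calc B = intentOf I (extentOf I K) := hgen.symm
      _ ⊆ intentOf I (extentOf I Bd) := intentOf_anti I (extentOf_anti I hKBd)
      _ = Bd := hd.2.symm ▸ hd.1
  · intro hblock
    by_contra hne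
    have hA : A ⊂ extentOf I K :=
      (hc.subset_extentOf hK).ssubset_of_ne fun hAK => hne (hAK ▸ hc.1)
    obtain ⟨Ad, Bd, hcover, hAd⟩ := exists_isUpperCover_subset I (isConcept_extentOf I K) hA
    refine hblock Ad Bd hcover ((subset_intentOf_extentOf I K).trans ?_)
    exact hcover.1.1 ▸ intentOf_anti I hAd

theorem intentOf_extentOf_eq_iff_forall_inter_nonempty [Finite G] (hc : IsConcept I A B)
    {K : Set M} (hK : K ⊆ B) :
    intentOf I (extentOf I K) = B ↔ ∀ f ∈ intentionalFaces I A B, (K ∩ f).Nonempty := by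
  rw [hc.intentOf_extentOf_eq_iff hK]
  constructor
  · rintro hblock f ⟨Ad, Bd, hcover, rfl⟩
    obtain ⟨m, hmK, hmBd⟩ := Set.not_subset.mp (hblock Ad Bd hcover)
    exact ⟨m, hmK, hK hmK, hmBd⟩
  · rintro hblock Ad Bd hcover hKBd
    obtain ⟨m, hmK, -, hmBd⟩ := hblock _ ⟨Ad, Bd, hcover, rfl⟩
    exact hmBd (hKBd hmK)

end IsConcept

theorem minimal_generator_iff_minimal_blocker_general {G M : Type*} [Finite G]
    (I : Set (G × M)) (A : Set G) (B : Set M) (h : IsConcept I A B)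
    (H : Set M) (hHB : H ⊆ B) :
    (intentOf I (extentOf I H) = B ∧
        ∀ H₁ : Set M, H₁ ⊂ H → intentOf I (extentOf I H₁) ≠ B) ↔
      ((∀ f ∈ {f : Set M | ∃ (Ad : Set G) (Bd : Set M),
            IsUpperCover I A B Ad Bd ∧ f = B \ Bd}, (H ∩ f).Nonempty) ∧
        ∀ Z : Set M, Z ⊂ H →
          ¬ ∀ f ∈ {f : Set M | ∃ (Ad : Set G) (Bd : Set M),
              IsUpperCover I A B Ad Bd ∧ f = B \ Bd}, (Z ∩ f).Nonempty) := by
  have key {K : Set M} (hK : K ⊆ B) :=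
    h.intentOf_extentOf_eq_iff_forall_inter_nonempty hK
  exact and_congr (key hHB)
    (forall₂_congr fun Z hZ => not_congr (key (hZ.subset.trans hHB)))

/-- Minimal-generator / minimal-blocker correspondence: `H ⊆ B` is a minimal generator
of the concept `(A, B)` iff it is a minimal blocker of the family `Λ_c` of intentional
faces of `(A, B)` (correctness of the Minigen procedure). -/
theorem minimal_generator_iff_minimal_blocker {G M : Type*} [Finite G] [Finite M]
    (I : Set (G × M)) (A : Set G) (B : Set M) (h : IsConcept I A B)
    (H : Set M) (hHB : H ⊆ B) :
    (intentOf I (extentOf I H) = B ∧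
        ∀ H₁ : Set M, H₁ ⊂ H → intentOf I (extentOf I H₁) ≠ B) ↔
      ((∀ f ∈ {f : Set M | ∃ (Ad : Set G) (Bd : Set M),
            IsUpperCover I A B Ad Bd ∧ f = B \ Bd}, (H ∩ f).Nonempty) ∧
        ∀ Z : Set M, Z ⊂ H →
          ¬ ∀ f ∈ {f : Set M | ∃ (Ad : Set G) (Bd : Set M),
              IsUpperCover I A B Ad Bd ∧ f = B \ Bd}, (Z ∩ f).Nonempty) :=
  minimal_generator_iff_minimal_blocker_general I A B h H hHB
end

section
/- Let Λ be a family of nonempty finite subsets of a finite set and let f be a further nonempty finite set. Then every minimal blocker Z of Λ ∪ {f} has one of the following two forms: (i) Z is a minimal blocker of Λ with Z ∩ f ≠ ∅, or (ii) Z = Z₀ ∪ {a} where Z₀ is a minimal blocker of Λ and a ∈ f. Conversely, every set of form (i) or (ii) is a blocker of Λ ∪ {f}. (Correctness of the incremental update step, lines 8–15, of the Minigen procedure in Algorithm 1.) -/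
/-- `Z` is a blocker of the family `Λ`: it meets every member of `Λ`. -/
def IsBlocker {α : Type*} (Λ : Set (Set α)) (Z : Set α) : Prop :=
  ∀ f ∈ Λ, (Z ∩ f).Nonempty

/-- `Z` is a minimal blocker of the family `Λ`: it is a blocker and no proper subset
of it is a blocker. -/
def IsMinimalBlocker {α : Type*} (Λ : Set (Set α)) (Z : Set α) : Prop :=
  IsBlocker Λ Z ∧ ∀ Z' : Set α, Z' ⊂ Z → ¬ IsBlocker Λ Z'

lemma exists_min_blocker {α : Type*} [Finite α] (Λ : Set (Set α)) (Z' : Set α)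
    (h : IsBlocker Λ Z') : ∃ Z₀ ⊆ Z', IsMinimalBlocker Λ Z₀ := by
  obtain ⟨m, ⟨hmZ, hmb⟩, hmin⟩ := (IsWellFounded.wf (α := Set α) (r := (· < ·))).has_min
    {W | W ⊆ Z' ∧ IsBlocker Λ W} ⟨Z', subset_rfl, h⟩
  exact ⟨m, hmZ, hmb, fun W hW hWb => hmin W ⟨hW.subset.trans hmZ, hWb⟩ hW⟩

/-- Correctness of the incremental update step of the Minigen procedure: every minimal
blocker of `Λ ∪ {f}` is either (i) a minimal blocker of `Λ` meeting `f`, or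
(ii) of the form `Z₀ ∪ {a}` for a minimal blocker `Z₀` of `Λ` and some `a ∈ f`;
conversely, every set of form (i) or (ii) is a blocker of `Λ ∪ {f}`. -/
theorem minigen_update_step {α : Type*} [Finite α] (Λ : Set (Set α)) (f : Set α)
    (hΛ : ∀ s ∈ Λ, s.Nonempty) (hf : f.Nonempty) :
    (∀ Z : Set α, IsMinimalBlocker (Λ ∪ {f}) Z →
        (IsMinimalBlocker Λ Z ∧ (Z ∩ f).Nonempty) ∨
          (∃ (Z₀ : Set α) (a : α), IsMinimalBlocker Λ Z₀ ∧ a ∈ f ∧ Z = Z₀ ∪ {a})) ∧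
      (∀ Z : Set α,
        ((IsMinimalBlocker Λ Z ∧ (Z ∩ f).Nonempty) ∨
          (∃ (Z₀ : Set α) (a : α), IsMinimalBlocker Λ Z₀ ∧ a ∈ f ∧ Z = Z₀ ∪ {a})) →
        IsBlocker (Λ ∪ {f}) Z) := by
  constructor
  · intro Z hZ
    obtain ⟨hZb, hZmin⟩ := hZ
    have hZΛ : IsBlocker Λ Z := fun s hs => hZb s (Or.inl hs)
    have hZf : (Z ∩ f).Nonempty := hZb f (Or.inr rfl)
    by_cases hm : IsMinimalBlocker Λ Z
    · exact Or.inl ⟨hm, hZf⟩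
    · have hex : ∃ Z', Z' ⊂ Z ∧ IsBlocker Λ Z' := by
        by_contra h
        push_neg at h
        exact hm ⟨hZΛ, fun Z' hZ' => h Z' hZ'⟩
      obtain ⟨Z', hZ'sub, hZ'b⟩ := hex
      obtain ⟨Z₀, hZ₀Z', hZ₀⟩ := exists_min_blocker Λ Z' hZ'b
      obtain ⟨a, haZ, haf⟩ := hZf
      refine Or.inr ⟨Z₀, a, hZ₀, haf, ?_⟩
      have hsub : Z₀ ∪ {a} ⊆ Z := Set.union_subset (hZ₀Z'.trans hZ'sub.subset)
        (Set.singleton_subset_iff.2 haZ)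
      have hblock : IsBlocker (Λ ∪ {f}) (Z₀ ∪ {a}) := by
        rintro s (hs | rfl)
        · obtain ⟨x, hx⟩ := hZ₀.1 s hs
          exact ⟨x, Or.inl hx.1, hx.2⟩
        · exact ⟨a, Or.inr rfl, haf⟩
      by_contra hne
      exact hZmin _ (lt_of_le_of_ne hsub fun h => hne h.symm) hblock
  · rintro Z (⟨⟨hZb, -⟩, hZf⟩ | ⟨Z₀, a, ⟨hZ₀b, -⟩, haf, rfl⟩)
    · rintro s (hs | rfl)
      · exact hZb s hs
      · exact hZf
    · rintro s (hs | rfl)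
      · obtain ⟨x, hx⟩ := hZ₀b s hs
        exact ⟨x, Or.inl hx.1, hx.2⟩
      · exact ⟨a, Or.inr rfl, haf⟩
end
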